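/- For every L ≥ 2, the open-chain Hamiltonian H_L commutes with all L+1 Clifford generators: H_L·Bⱼ = Bⱼ·H_L for every j ∈ {1, …, L+1}; hence the symmetry algebra of the open integrable spin chain contains the Clifford algebra 𝒞_{L+1}. -/
import Mathlib


noncomputable section

open Matrix Complex

def Bmat : Matrix (Fin 2) (Fin 2) ℂ := !![0, 1; 1, 0]
def Cmat : Matrix (Fin 2) (Fin 2) ℂ := !![0, 1; -1, 0]
def Dmat : Matrix (Fin 2) (Fin 2) ℂ := !![1, 0; 0, -1]

/-- The operator on `(ℂ²)^{⊗L}` acting as `f s` on the `s`-th tensor factor. -/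
def siteOp (L : ℕ) (f : Fin L → Matrix (Fin 2) (Fin 2) ℂ) :
    Matrix (Fin L → Fin 2) (Fin L → Fin 2) ℂ :=
  Matrix.of fun p q => ∏ s : Fin L, f s (p s) (q s)

/-- The Clifford generators: for `j.val < L`, `B_{j+1} = D^{⊗ j} ⊗ B ⊗ Id^{⊗(L−j−1)}`;
for `j.val = L` this is `B_{L+1} = D^{⊗L}`. -/
def Bgen (L : ℕ) (j : Fin (L + 1)) : Matrix (Fin L → Fin 2) (Fin L → Fin 2) ℂ :=
  siteOp L fun s =>
    if (s : ℕ) < (j : ℕ) then Dmat else if (s : ℕ) = (j : ℕ) then Bmat else 1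

/-- The open-chain Hamiltonian `H_L = Σ_{i=1}^{L−1} H_{i,i+1}`, where `H_{i,i+1}`
acts as `B` on site `i`, as `C` on site `i+1`, and as the identity elsewhere. -/
def Ham (L : ℕ) : Matrix (Fin L → Fin 2) (Fin L → Fin 2) ℂ :=
  ∑ i : Fin (L - 1), siteOp L fun s =>
    if (s : ℕ) = (i : ℕ) then Bmat else if (s : ℕ) = (i : ℕ) + 1 then Cmat else 1

lemma BD_anticomm : Bmat * Dmat = (-1 : ℂ) • (Dmat * Bmat) := by
  simp [Bmat, Dmat]

lemma CD_anticomm : Cmat * Dmat = (-1 : ℂ) • (Dmat * Cmat) := by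
  ext i j; fin_cases i <;> fin_cases j <;> norm_num [Cmat, Dmat, Matrix.mul_apply, Fin.sum_univ_two]

lemma CB_anticomm : Cmat * Bmat = (-1 : ℂ) • (Bmat * Cmat) := by
  ext i j; fin_cases i <;> fin_cases j <;> norm_num [Cmat, Bmat, Matrix.mul_apply, Fin.sum_univ_two]

lemma siteOp_mul (L : ℕ) (f g : Fin L → Matrix (Fin 2) (Fin 2) ℂ) :
    siteOp L f * siteOp L g = siteOp L (fun s => f s * g s) := by
  ext p q
  simp only [siteOp, Matrix.mul_apply, Matrix.of_apply]
  rw [Finset.prod_univ_sum, Fintype.piFinset_univ]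
  exact Finset.sum_congr rfl fun r _ => (Finset.prod_mul_distrib).symm

lemma siteOp_sign (L : ℕ) (f g : Fin L → Matrix (Fin 2) (Fin 2) ℂ) (ε : Fin L → ℂ)
    (hε : ∀ s, f s * g s = ε s • (g s * f s)) (hprod : ∏ s, ε s = 1) :
    siteOp L (fun s => f s * g s) = siteOp L (fun s => g s * f s) := by
  ext p q
  simp only [siteOp, Matrix.of_apply]
  calc ∏ s, (f s * g s) (p s) (q s)
      = ∏ s, ε s * (g s * f s) (p s) (q s) := by
        refine Finset.prod_congr rfl fun s _ => ?_
        rw [hε s]; rfl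
    _ = (∏ s, ε s) * ∏ s, (g s * f s) (p s) (q s) := Finset.prod_mul_distrib
    _ = ∏ s, (g s * f s) (p s) (q s) := by rw [hprod, one_mul]

/-- For every `L ≥ 2`, the open-chain Hamiltonian commutes with all `L+1` Clifford
generators: the symmetry algebra of the open spin chain contains the Clifford
algebra `𝒞_{L+1}`. -/
theorem Ham_commutes_with_clifford (L : ℕ) (hL : 2 ≤ L) (j : Fin (L + 1)) :
    Ham L * Bgen L j = Bgen L j * Ham L := by
  rw [Ham, Finset.sum_mul, Finset.mul_sum]
  refine Finset.sum_congr rfl fun i _ => ?_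
  set jj := (j : ℕ) with hjj
  set ii := (i : ℕ) with hii
  have hi1 : ii + 1 < L := by
    have := i.isLt; omega
  set h : Fin L → Matrix (Fin 2) (Fin 2) ℂ :=
    fun s => if (s : ℕ) = ii then Bmat else if (s : ℕ) = ii + 1 then Cmat else 1 with hh
  set b : Fin L → Matrix (Fin 2) (Fin 2) ℂ :=
    fun s => if (s : ℕ) < jj then Dmat else if (s : ℕ) = jj then Bmat else 1 with hb
  show siteOp L h * Bgen L j = Bgen L j * siteOp L h
  have hBgen : Bgen L j = siteOp L b := rfl
  rw [hBgen, siteOp_mul, siteOp_mul]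
  rcases le_or_gt jj ii with hcase | hcase
  · -- all sites commute pointwise
    have : (fun s => h s * b s) = (fun s => b s * h s) := by
      funext s
      simp only [hh, hb]
      split_ifs <;> first | omega | simp | rfl
    rw [this]
  · -- ii + 1 ≤ jj : anticommutation at sites ii and ii+1
    have hii1jj : ii + 1 ≤ jj := hcase
    refine siteOp_sign L h b
      (fun s => (if (s : ℕ) = ii then -1 else 1) * (if (s : ℕ) = ii + 1 then -1 else 1))
      ?_ ?_
    · intro s
      simp only [hh, hb]
      by_cases h1 : (s : ℕ) = ii
      · have : (s : ℕ) < jj := by omega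
        have h2 : ¬ (s : ℕ) = ii + 1 := by omega
        simp only [if_pos h1, if_pos this, if_neg h2, mul_one]
        exact BD_anticomm
      · by_cases h2 : (s : ℕ) = ii + 1
        · simp only [if_neg h1, if_pos h2, one_mul]
          rcases lt_or_eq_of_le hii1jj with hlt | heq
          · have : (s : ℕ) < jj := by omega
            simp only [if_pos this]
            exact CD_anticomm
          · have hnlt : ¬ (s : ℕ) < jj := by omega
            have heq2 : (s : ℕ) = jj := by omega
            simp only [if_neg hnlt, if_pos heq2]
            exact CB_anticomm
        · simp only [if_neg h1, if_neg h2, one_mul, mul_one, one_smul]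
    · rw [Finset.prod_mul_distrib]
      have key : ∀ (k : ℕ) (hk : k < L),
          (∏ s : Fin L, (if (s : ℕ) = k then (-1 : ℂ) else 1)) = -1 := by
        intro k hk
        calc (∏ s : Fin L, (if (s : ℕ) = k then (-1 : ℂ) else 1))
            = ∏ s : Fin L, (if s = ⟨k, hk⟩ then (-1 : ℂ) else 1) := by
              refine Finset.prod_congr rfl fun s _ => ?_
              exact if_congr (by simp [Fin.ext_iff]) rfl rfl
          _ = -1 := by rw [Finset.prod_ite_eq' Finset.univ]; simp
      rw [key ii (by omega), key (ii + 1) hi1]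
      norm_num
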